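/- Let G be a countable group with a nonabelian free subgroup and H a nontrivial cyclic group. The map K(A) = ⟨xhx^{-1} : x ∈ A⟩ from infinite subsets of G to infinite subgroups of G*H satisfies: for infinite A, B ⊆ G, there exist g_1,…,g_n ∈ G with A = g_1B ∩ … ∩ g_nB if and only if there exist γ_1,…,γ_n ∈ G*H with K(A) = γ_1K(B)γ_1^{-1} ∩ … ∩ γ_nK(B)γ_n^{-1}. -/

import Mathlib

/-!
Let `N = ∗_{g ∈ G} H` be the free product of copies of `H` indexed by `G`, on which `G` acts
by translating indices. Then `G ∗ H ≅ N ⋊ G`, with `x c x⁻¹` going to `c` in the factor indexed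
by `x`. Since `h` generates `H`, this carries `K(S)` onto the sub-free-product `N_S` of the
factors indexed by `S`, and `N_S ∩ N_T = N_{S ∩ T}`; conjugation by `γ = (n, g)` carries `K(B)`
onto `n N_{gB} n⁻¹`.

The key point is that `N_A ≤ n N_C n⁻¹` with `|A| ≥ 2` forces `n ∈ N_C`: if `r` is the
retraction of `N` onto `N_C`, then `n r(n)⁻¹` commutes with letters from two distinct factors,
and in a free product only `1` does. Hence `K(A) = ⋂ γᵢ K(B) γᵢ⁻¹` gives `N_A = N_{⋂ gᵢ B}`,
that is `A = ⋂ gᵢ B`. Conversely `x K(B) x⁻¹ = K(xB)` for `x ∈ G`.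
-/

open Monoid

theorem Finset.apply_biInf_eq_biInf_apply {ι α β : Type*}
    [CompleteLattice α] [CompleteLattice β] {s : Finset ι} (hs : s.Nonempty) (f : ι → α) (g : α → β)
    (hg : ∀ x y, g (x ⊓ y) = g x ⊓ g y) : g (⨅ i ∈ s, f i) = ⨅ i ∈ s, g (f i) := by
  simpa only [Finset.inf'_eq_inf, Finset.inf_eq_iInf, Function.comp_apply]
    using Finset.apply_inf'_eq_inf'_comp hs g hg

theorem MonoidHom.commute_mul_inv_apply {G : Type*} [Group G] (f : G →* G) {x w : G}
    (hx : f x = x) (hwx : f (w⁻¹ * x * w) = w⁻¹ * x * w) : Commute x (w * (f w)⁻¹) := by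
  rw [map_mul, map_mul, map_inv, hx] at hwx
  calc x * (w * (f w)⁻¹) = w * (w⁻¹ * x * w) * (f w)⁻¹ := by group
    _ = w * (f w)⁻¹ * x := by rw [← hwx]; group

theorem Subgroup.map_map_conj {G G' : Type*} [Group G] [Group G'] (f : G →* G') (γ : G)
    (P : Subgroup G) :
    (P.map (MulAut.conj γ).toMonoidHom).map f =
      (P.map f).map (MulAut.conj (f γ)).toMonoidHom := by
  rw [Subgroup.map_map, Subgroup.map_map]
  congr 1
  ext x
  simp

theorem SemidirectProduct.map_conj_map_inl {N G : Type*} [Group N] [Group G]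
    {φ : G →* MulAut N} (δ : N ⋊[φ] G) (P : Subgroup N) :
    (P.map inl).map (MulAut.conj δ).toMonoidHom =
      ((P.map (φ δ.right).toMonoidHom).map (MulAut.conj δ.left).toMonoidHom).map inl := by
  simp only [Subgroup.map_map]
  congr 1
  ext n <;> simp

namespace Monoid.CoprodI

section Words

variable {ι : Type*} {M : ι → Type*} [∀ i, Monoid (M i)]

theorem NeWord.prod_mul_of_eq_one_or {i j : ι} (w : NeWord M i j) {k : ι} (m : M k) :
    w.prod * of m = 1 ∨ ∃ (l : ι) (w' : NeWord M i l), w'.prod = w.prod * of m := by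
  induction w with
  | @singleton i x hx =>
    rw [prod_singleton]
    by_cases hki : k = i
    · subst hki
      by_cases hxm : x * m = 1
      · exact .inl (by rw [← map_mul, hxm, map_one])
      · exact .inr ⟨k, singleton _ hxm, by rw [prod_singleton, map_mul]⟩
    · by_cases hm : m = 1
      · exact .inr ⟨i, singleton x hx, by rw [hm, map_one, mul_one, prod_singleton]⟩
      · exact .inr ⟨k, append (singleton x hx) (Ne.symm hki) (singleton m hm), by
          rw [append_prod, prod_singleton, prod_singleton]⟩
  | append w₁ hne w₂ _ ih =>
    rw [append_prod, mul_assoc]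
    rcases ih with h | ⟨l, w', hw'⟩
    · exact .inr ⟨_, w₁, by rw [h, mul_one]⟩
    · exact .inr ⟨l, append w₁ hne w', by rw [append_prod, hw']⟩

theorem NeWord.exists_prod_eq {x : CoprodI M} (hx : x ≠ 1) :
    ∃ (i j : ι) (w : NeWord M i j), w.prod = x := by
  classical
  have hne : Word.equiv x ≠ Word.empty := fun h => hx <| by
    rw [← Word.equiv.symm_apply_apply x, h]
    exact Word.prod_empty
  obtain ⟨i, j, w, hw⟩ := NeWord.of_word _ hne
  exact ⟨i, j, w, by rw [NeWord.prod, hw]; exact Word.equiv.symm_apply_apply x⟩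

variable [DecidableEq ι] [∀ i, DecidableEq (M i)]

theorem NeWord.fstIdx_equiv_prod {i j : ι} (w : NeWord M i j) :
    (Word.equiv w.prod).fstIdx = some i := by
  have hw : Word.equiv w.toWord.prod = w.toWord := Word.equiv.apply_symm_apply w.toWord
  rw [NeWord.prod, hw]
  simp [Word.fstIdx, NeWord.toWord]

theorem fstIdx_equiv_of_commute {i : ι} {m : M i} (hm : m ≠ 1) {y : CoprodI M} (hy : y ≠ 1)
    (hc : Commute (of m) y) : (Word.equiv y).fstIdx = some i := by
  obtain ⟨k, l, w, rfl⟩ := NeWord.exists_prod_eq hy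
  rcases eq_or_ne k i with rfl | hki
  · exact w.fstIdx_equiv_prod
  -- otherwise `of m * y` would start in `M i` while `y * of m` is `1` or starts in `M k`
  have hleft : (Word.equiv (of m * w.prod)).fstIdx = some i := by
    rw [← NeWord.prod_singleton m hm, ← NeWord.append_prod (hne := hki.symm)]
    exact NeWord.fstIdx_equiv_prod _
  rw [hc.eq] at hleft
  rcases w.prod_mul_of_eq_one_or m with h | ⟨l', w', hw'⟩
  · rw [h] at hleft
    exact absurd hleft (by simp [Word.equiv, Word.fstIdx, Word.empty])
  · rw [← hw', w'.fstIdx_equiv_prod, Option.some_inj] at hleft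
    exact absurd hleft hki

theorem eq_one_of_commute_of_commute {i j : ι} (hij : i ≠ j) {m : M i} {m' : M j}
    (hm : m ≠ 1) (hm' : m' ≠ 1) {y : CoprodI M} (h : Commute (of m) y)
    (h' : Commute (of m') y) : y = 1 := by
  by_contra hy
  exact hij <| Option.some_inj.mp <|
    (fstIdx_equiv_of_commute hm hy h).symm.trans (fstIdx_equiv_of_commute hm' hy h')

end Words

section Restrict

variable {ι : Type*} {M : ι → Type*}

section

variable [∀ i, Monoid (M i)]

open scoped Classical in
noncomputable def restrict (S : Set ι) : CoprodI M →* CoprodI M :=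
  lift fun i => if i ∈ S then of else 1

theorem restrict_of_of_mem {S : Set ι} {i : ι} (hi : i ∈ S) (m : M i) :
    restrict S (of m) = of m := by
  rw [restrict, lift_of, if_pos hi]

theorem restrict_of_of_notMem {S : Set ι} {i : ι} (hi : i ∉ S) (m : M i) :
    restrict S (of m) = 1 := by
  rw [restrict, lift_of, if_neg hi, MonoidHom.one_apply]

theorem restrict_restrict (S T : Set ι) (x : CoprodI M) :
    restrict S (restrict T x) = restrict (S ∩ T) x := by
  induction x using induction_on with
  | one => simp only [map_one]
  | of i m =>
    by_cases hT : i ∈ T <;> by_cases hS : i ∈ S <;>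
      simp [restrict_of_of_mem, restrict_of_of_notMem, *]
  | mul x y hx hy => simp only [map_mul, hx, hy]

end

variable [∀ i, Group (M i)] {S T : Set ι}

theorem mem_range_restrict_iff {x : CoprodI M} : x ∈ (restrict S).range ↔ restrict S x = x := by
  refine ⟨?_, fun hx => ⟨x, hx⟩⟩
  rintro ⟨y, rfl⟩
  rw [restrict_restrict, Set.inter_self]

theorem range_restrict_inf :
    (restrict S).range ⊓ (restrict T).range = (restrict (M := M) (S ∩ T)).range := by
  refine le_antisymm ?_ (le_inf ?_ ?_)
  · intro x hx
    obtain ⟨hS, hT⟩ := Subgroup.mem_inf.mp hx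
    rw [mem_range_restrict_iff] at hS hT ⊢
    rw [← restrict_restrict, hT, hS]
  · rintro _ ⟨y, rfl⟩
    exact ⟨restrict T y, restrict_restrict S T y⟩
  · rintro _ ⟨y, rfl⟩
    exact ⟨restrict S y, by rw [restrict_restrict, Set.inter_comm]⟩

theorem range_restrict_biInter {κ : Type*} {t : Finset κ} (ht : t.Nonempty) (C : κ → Set ι) :
    (restrict (M := M) (⋂ k ∈ t, C k)).range = ⨅ k ∈ t, (restrict (C k)).range := by
  simp only [← Set.iInf_eq_iInter]
  exact Finset.apply_biInf_eq_biInf_apply ht C (fun S => (restrict (M := M) S).range)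
    fun _ _ => range_restrict_inf.symm

theorem of_mem_range_restrict_iff {i : ι} {m : M i} (hm : m ≠ 1) :
    of m ∈ (restrict S).range ↔ i ∈ S := by
  refine ⟨fun h => ?_, fun hi => ⟨of m, restrict_of_of_mem hi m⟩⟩
  by_contra hi
  rw [mem_range_restrict_iff, restrict_of_of_notMem hi, eq_comm, ← map_one of] at h
  exact hm (of_injective i h)

theorem range_restrict_injective [∀ i, Nontrivial (M i)] :
    Function.Injective fun S : Set ι => (restrict (M := M) S).range := by
  intro S T hST
  ext i
  obtain ⟨m, hm⟩ := exists_ne (1 : M i)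
  rw [← of_mem_range_restrict_iff (S := S) hm, ← of_mem_range_restrict_iff (S := T) hm]
  exact SetLike.ext_iff.mp hST _

theorem mem_range_restrict_of_conj_mem {i j : ι} (hij : i ≠ j) {m : M i} {m' : M j}
    (hm : m ≠ 1) (hm' : m' ≠ 1) {w : CoprodI M} (h : w⁻¹ * of m * w ∈ (restrict S).range)
    (h' : w⁻¹ * of m' * w ∈ (restrict S).range) : w ∈ (restrict S).range := by
  classical
  have key : ∀ {k : ι} {c : M k}, c ≠ 1 → w⁻¹ * of c * w ∈ (restrict S).range →
      Commute (of c) (w * (restrict S w)⁻¹) := by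
    intro k c hc hconj
    rw [mem_range_restrict_iff] at hconj
    have hk : k ∈ S := by
      by_contra hk
      rw [map_mul, map_mul, map_inv, restrict_of_of_notMem hk, mul_one, inv_mul_cancel, eq_comm,
        mul_assoc, inv_mul_eq_one, right_eq_mul, map_eq_one_iff _ (of_injective k)] at hconj
      exact hc hconj
    exact MonoidHom.commute_mul_inv_apply (restrict S) (x := of c) (w := w)
      (restrict_of_of_mem hk c) hconj
  rw [mem_range_restrict_iff, eq_comm, ← mul_inv_eq_one]
  exact eq_one_of_commute_of_commute hij hm hm' (key hm h) (key hm' h')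

theorem eq_biInter_of_range_restrict_eq_biInf_conj [∀ i, Nontrivial (M i)] {κ : Type*}
    {t : Finset κ} (ht : t.Nonempty) {A : Set ι} (hA : A.Nontrivial) (n : κ → CoprodI M)
    (C : κ → Set ι)
    (hAC : (restrict A).range =
      ⨅ k ∈ t, (restrict (C k)).range.map (MulAut.conj (n k)).toMonoidHom) :
    A = ⋂ k ∈ t, C k := by
  have hfix : ∀ k ∈ t,
      (restrict (C k)).range.map (MulAut.conj (n k)).toMonoidHom = (restrict (C k)).range := by
    intro k hk
    have hconj : ∀ a ∈ A, ∀ c : M a, (n k)⁻¹ * of c * n k ∈ (restrict (C k)).range := by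
      intro a ha c
      have hc : of c ∈ (restrict A).range := ⟨of c, restrict_of_of_mem ha c⟩
      simp only [hAC, Subgroup.mem_iInf, Subgroup.mem_map_equiv, MulAut.conj_symm_apply] at hc
      exact hc k hk
    obtain ⟨a, ha, b, hb, hab⟩ := hA
    obtain ⟨c, hc⟩ := exists_ne (1 : M a)
    obtain ⟨c', hc'⟩ := exists_ne (1 : M b)
    exact Subgroup.conj_smul_eq_self_of_mem
      (mem_range_restrict_of_conj_mem hab hc hc' (hconj a ha c) (hconj b hb c'))
  apply range_restrict_injective (M := M)
  dsimp only
  rw [hAC, range_restrict_biInter ht]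
  exact iInf_congr fun k => iInf_congr (hfix k)

theorem closure_of_image_eq_range_restrict {C : Type*} [Group C] {h : C}
    (hgen : ∀ c : C, c ∈ Subgroup.zpowers h) (S : Set ι) :
    Subgroup.closure ((fun i => of (M := fun _ : ι => C) (i := i) h) '' S) =
      (restrict S).range := by
  refine le_antisymm (Subgroup.closure_le _ |>.mpr ?_) ?_
  · rintro _ ⟨i, hi, rfl⟩
    exact ⟨of h, restrict_of_of_mem (M := fun _ : ι => C) hi h⟩
  · rintro _ ⟨x, rfl⟩
    induction x using induction_on with
    | one => simp only [map_one, Subgroup.one_mem]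
    | of i c =>
      by_cases hi : i ∈ S
      · obtain ⟨k, rfl⟩ := hgen c
        rw [restrict_of_of_mem hi, map_zpow]
        exact Subgroup.zpow_mem _ (Subgroup.subset_closure (Set.mem_image_of_mem _ hi)) k
      · rw [restrict_of_of_notMem hi]
        exact Subgroup.one_mem _
    | mul x y hx hy => simpa only [map_mul] using Subgroup.mul_mem _ hx hy

end Restrict

section Translate

variable {G H : Type*} [Group G] [Group H]

def translate : G →* MulAut (CoprodI fun _ : G => H) where
  toFun g := MonoidHom.toMulEquiv (lift fun i => of (M := fun _ : G => H) (i := g * i))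
    (lift fun i => of (M := fun _ : G => H) (i := g⁻¹ * i))
    (ext_hom _ _ fun i => by ext; simp) (ext_hom _ _ fun i => by ext; simp)
  map_one' := MulEquiv.toMonoidHom_injective <| ext_hom _ _ fun i => by ext; simp
  map_mul' g g' := MulEquiv.toMonoidHom_injective <| ext_hom _ _ fun i => by ext; simp [mul_assoc]

theorem translate_of (g i : G) (c : H) :
    translate g (of (M := fun _ : G => H) (i := i) c) = of (M := fun _ : G => H) (i := g * i) c :=
  lift_of _ _

theorem map_translate_range_restrict (g : G) (S : Set G) :
    (restrict S).range.map (translate (H := H) g).toMonoidHom =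
      (restrict ((g * ·) '' S)).range := by
  have hcomm : (translate (H := H) g).toMonoidHom.comp (restrict S) =
      (restrict ((g * ·) '' S)).comp (translate g).toMonoidHom := by
    refine ext_hom _ _ fun i => MonoidHom.ext fun c => ?_
    simp only [MonoidHom.comp_apply, MulEquiv.coe_toMonoidHom, translate_of]
    by_cases hi : i ∈ S
    · rw [restrict_of_of_mem hi, restrict_of_of_mem (Set.mem_image_of_mem _ hi), translate_of]
    · rw [restrict_of_of_notMem hi, restrict_of_of_notMem (by simpa using hi), map_one]
  rw [← MonoidHom.range_comp, hcomm, MonoidHom.range_comp,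
    MonoidHom.range_eq_top_of_surjective (translate (H := H) g).toMonoidHom
      (translate g).surjective,
    ← MonoidHom.range_eq_map]

end Translate

end Monoid.CoprodI

namespace Monoid.Coprod

open CoprodI

variable {G H : Type*} [Group G] [Group H]

def toSemidirect : Coprod G H →* (CoprodI fun _ : G => H) ⋊[translate] G :=
  Coprod.lift SemidirectProduct.inr
    (SemidirectProduct.inl.comp (CoprodI.of (M := fun _ : G => H) (i := 1)))

def ofSemidirect : (CoprodI fun _ : G => H) ⋊[translate] G →* Coprod G H :=
  SemidirectProduct.lift (CoprodI.lift fun x => (MulAut.conj (inl x)).toMonoidHom.comp inr) inl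
    fun g => CoprodI.ext_hom _ _ fun i => by ext c; simp [translate_of, mul_assoc]

theorem toSemidirect_injective : Function.Injective (toSemidirect (G := G) (H := H)) := by
  have h : ofSemidirect.comp toSemidirect = MonoidHom.id (Coprod G H) :=
    Coprod.hom_ext (MonoidHom.ext fun g => by simp [toSemidirect, ofSemidirect])
      (MonoidHom.ext fun c => by simp [toSemidirect, ofSemidirect])
  exact Function.LeftInverse.injective (g := ofSemidirect) (DFunLike.congr_fun h)

theorem toSemidirect_conj_inr (x : G) (c : H) :
    toSemidirect (inl x * inr c * (inl x)⁻¹) =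
      SemidirectProduct.inl (of (M := fun _ : G => H) (i := x) c) := by
  ext <;> simp [toSemidirect, translate_of]

def closureConjInr (h : H) (S : Set G) : Subgroup (Coprod G H) :=
  Subgroup.closure ((fun x : G => inl x * inr h * (inl x)⁻¹) '' S)

theorem map_conj_inl_closureConjInr (h : H) (g : G) (S : Set G) :
    (closureConjInr h S).map (MulAut.conj (inl g)).toMonoidHom =
      closureConjInr h ((g * ·) '' S) := by
  rw [closureConjInr, closureConjInr, MonoidHom.map_closure, Set.image_image, Set.image_image]
  congr 1
  refine Set.image_congr fun x _ => ?_
  simp only [MulEquiv.coe_toMonoidHom, MulAut.conj_apply, map_mul, mul_inv_rev, map_inv]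
  group

variable {h : H}

theorem map_toSemidirect_closureConjInr (hgen : ∀ c : H, c ∈ Subgroup.zpowers h) (S : Set G) :
    (closureConjInr h S).map toSemidirect = (restrict S).range.map SemidirectProduct.inl := by
  rw [closureConjInr, MonoidHom.map_closure, Set.image_image,
    Set.image_congr fun x _ => toSemidirect_conj_inr x h, ← Set.image_image SemidirectProduct.inl,
    ← MonoidHom.map_closure, closure_of_image_eq_range_restrict hgen]

theorem closureConjInr_biInter (hgen : ∀ c : H, c ∈ Subgroup.zpowers h) {κ : Type*}
    {t : Finset κ} (ht : t.Nonempty) (C : κ → Set G) :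
    closureConjInr h (⋂ k ∈ t, C k) = ⨅ k ∈ t, closureConjInr h (C k) := by
  apply Subgroup.map_injective (toSemidirect_injective (G := G) (H := H))
  rw [Finset.apply_biInf_eq_biInf_apply ht _ _
    fun _ _ => Subgroup.map_inf _ _ _ toSemidirect_injective]
  simp only [map_toSemidirect_closureConjInr hgen]
  rw [range_restrict_biInter ht, Finset.apply_biInf_eq_biInf_apply ht _ _
    fun _ _ => Subgroup.map_inf _ _ _ SemidirectProduct.inl_injective]

theorem map_toSemidirect_map_conj_closureConjInr (hgen : ∀ c : H, c ∈ Subgroup.zpowers h)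
    (γ : Coprod G H) (S : Set G) :
    ((closureConjInr h S).map (MulAut.conj γ).toMonoidHom).map toSemidirect =
      ((restrict (((toSemidirect γ).right * ·) '' S)).range.map
        (MulAut.conj (toSemidirect γ).left).toMonoidHom).map SemidirectProduct.inl := by
  rw [Subgroup.map_map_conj, map_toSemidirect_closureConjInr hgen,
    SemidirectProduct.map_conj_map_inl, map_translate_range_restrict]

theorem map_toSemidirect_biInf_map_conj_closureConjInr
    (hgen : ∀ c : H, c ∈ Subgroup.zpowers h) {t : Finset (Coprod G H)} (ht : t.Nonempty)
    (S : Set G) :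
    (⨅ γ ∈ t, (closureConjInr h S).map (MulAut.conj γ).toMonoidHom).map toSemidirect =
      (⨅ γ ∈ t, (restrict (((toSemidirect γ).right * ·) '' S)).range.map
        (MulAut.conj (toSemidirect γ).left).toMonoidHom).map SemidirectProduct.inl := by
  rw [Finset.apply_biInf_eq_biInf_apply ht _ _
      fun _ _ => Subgroup.map_inf _ _ _ toSemidirect_injective,
    Finset.apply_biInf_eq_biInf_apply ht _ _
      fun _ _ => Subgroup.map_inf _ _ _ SemidirectProduct.inl_injective]
  simp only [map_toSemidirect_map_conj_closureConjInr hgen]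

end Monoid.Coprod

theorem K_reduction_general
    (G H : Type) [Group G] [Group H]
    (h : H) (hgen : ∀ x : H, x ∈ Subgroup.zpowers h) (hnt : h ≠ 1)
    (A B : Set G) (hA : A.Infinite) :
    let K : Set G → Subgroup (Coprod G H) := fun A =>
      Subgroup.closure
        ((fun x : G => Coprod.inl x * (Coprod.inr h : Coprod G H) * (Coprod.inl x)⁻¹) '' A)
    ((∃ s : Finset G, s.Nonempty ∧ A = ⋂ g ∈ s, (fun a => g * a) '' B) ↔
      (∃ t : Finset (Coprod G H), t.Nonempty ∧
        K A = ⨅ γ ∈ t, Subgroup.map (MulAut.conj γ).toMonoidHom (K B))) := by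
  classical
  have : Nontrivial H := ⟨⟨h, 1, hnt⟩⟩
  show _ ↔ ∃ t : Finset (Coprod G H), t.Nonempty ∧ Coprod.closureConjInr h A =
    ⨅ γ ∈ t, (Coprod.closureConjInr h B).map (MulAut.conj γ).toMonoidHom
  constructor
  · rintro ⟨s, hs, rfl⟩
    refine ⟨s.image Coprod.inl, hs.image _, ?_⟩
    simp only [Finset.iInf_finset_image, Coprod.map_conj_inl_closureConjInr]
    exact Coprod.closureConjInr_biInter hgen hs _
  · rintro ⟨t, ht, hK⟩
    refine ⟨t.image fun γ => (Coprod.toSemidirect γ).right, ht.image _, ?_⟩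
    rw [Finset.set_biInter_finset_image]
    have hK' := congrArg (Subgroup.map Coprod.toSemidirect) hK
    rw [Coprod.map_toSemidirect_closureConjInr hgen,
      Coprod.map_toSemidirect_biInf_map_conj_closureConjInr hgen ht] at hK'
    exact CoprodI.eq_biInter_of_range_restrict_eq_biInf_conj ht hA.nontrivial _ _
      (Subgroup.map_injective SemidirectProduct.inl_injective hK')

/-- For a countable group `G` containing a nonabelian free subgroup and a nontrivial
cyclic group `H` with generator `h`, the map `K(A) = ⟨xhx⁻¹ : x ∈ A⟩` from infinite
subsets of `G` to (infinite) subgroups of `G ∗ H` satisfies: for infinite `A, B ⊆ G`,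
`A = g₁B ∩ … ∩ gₙB` for some `g₁,…,gₙ ∈ G` iff
`K(A) = γ₁K(B)γ₁⁻¹ ∩ … ∩ γₙK(B)γₙ⁻¹` for some `γ₁,…,γₙ ∈ G ∗ H`. -/
theorem K_reduction
    (G H : Type) [Group G] [Countable G] [Group H]
    (hfree : ∃ φ : FreeGroup Bool →* G, Function.Injective φ)
    (h : H) (hgen : ∀ x : H, x ∈ Subgroup.zpowers h) (hnt : h ≠ 1)
    (A B : Set G) (hA : A.Infinite) (hB : B.Infinite) :
    let K : Set G → Subgroup (Coprod G H) := fun A =>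
      Subgroup.closure
        ((fun x : G => Coprod.inl x * (Coprod.inr h : Coprod G H) * (Coprod.inl x)⁻¹) '' A)
    ((∃ s : Finset G, s.Nonempty ∧ A = ⋂ g ∈ s, (fun a => g * a) '' B) ↔
      (∃ t : Finset (Coprod G H), t.Nonempty ∧
        K A = ⨅ γ ∈ t, Subgroup.map (MulAut.conj γ).toMonoidHom (K B))) :=
  K_reduction_general G H h hgen hnt A B hA
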